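/- If an interval order P has interval representation (b,e) producing closed interval sequence σ, and σ' is obtained from σ by swapping two adjacent begin-events b(x)b(y) into b(y)b(x) (or two adjacent end-events e(x)e(y) into e(y)e(x)), then σ' is also the interval sequence of some interval representation of P. -/

import Mathlib

/-- Swapping two adjacent begin-events (resp. two adjacent end-events) in the
closed interval sequence of an interval representation `(b, e)` of a finite
interval order `P` yields the interval sequence of another interval
representation of `P`.

The interval sequence is encoded by the linear order `Q` restricted to the
event values `b x`, `e x` (all distinct); adjacency of two events means that
no other event value lies strictly between them, and the swapped sequence is
realized by the representation with the two values exchanged. -/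
theorem intervalSequence_swap
    (P : Type) [Fintype P] [PartialOrder P]
    (hio : ∀ w x y z : P, w < y → x < z → w < z ∨ x < y)
    (Q : Type) [LinearOrder Q] (b e : P → Q)
    (hdist : Function.Injective (Sum.elim b e : P ⊕ P → Q))
    (hbe : ∀ x : P, b x < e x)
    (hrep : ∀ x y : P, x < y ↔ e x < b y) :
    (∀ x y : P, x ≠ y → b x < b y →
      (∀ z : P, ¬ (b x < b z ∧ b z < b y)) →
      (∀ z : P, ¬ (b x < e z ∧ e z < b y)) →
      ∃ b' : P → Q,
        b' x = b y ∧ b' y = b x ∧ (∀ z : P, z ≠ x → z ≠ y → b' z = b z) ∧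
        Function.Injective (Sum.elim b' e : P ⊕ P → Q) ∧
        (∀ z : P, b' z < e z) ∧ (∀ u v : P, u < v ↔ e u < b' v)) ∧
    (∀ x y : P, x ≠ y → e x < e y →
      (∀ z : P, ¬ (e x < b z ∧ b z < e y)) →
      (∀ z : P, ¬ (e x < e z ∧ e z < e y)) →
      ∃ e' : P → Q,
        e' x = e y ∧ e' y = e x ∧ (∀ z : P, z ≠ x → z ≠ y → e' z = e z) ∧
        Function.Injective (Sum.elim b e' : P ⊕ P → Q) ∧
        (∀ z : P, b z < e' z) ∧ (∀ u v : P, u < v ↔ e' u < b v)) := by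
  classical
  have hne : ∀ u v : P, b u ≠ e v := by
    intro u v h
    have := hdist (a₁ := Sum.inl u) (a₂ := Sum.inr v) (by simpa using h)
    simp at this
  constructor
  · intro x y hxy hlt hnb hne'
    set b' : P → Q := fun z => if z = x then b y else if z = y then b x else b z with hb'
    have hb'x : b' x = b y := by simp [hb']
    have hb'y : b' y = b x := by simp [hb', hxy.symm]
    have hb'z : ∀ z : P, z ≠ x → z ≠ y → b' z = b z := by
      intro z h1 h2; simp [hb', h1, h2]
    refine ⟨b', hb'x, hb'y, hb'z, ?_, ?_, ?_⟩
    · have : (Sum.elim b' e : P ⊕ P → Q)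
          = (Sum.elim b e) ∘ Sum.map (Equiv.swap x y) id := by
        funext a
        rcases a with z | z
        · by_cases h1 : z = x
          · subst h1; simp [hb'x, Equiv.swap_apply_left]
          by_cases h2 : z = y
          · subst h2; simp [hb'y, Equiv.swap_apply_right]
          · simp [hb'z z h1 h2, Equiv.swap_apply_of_ne_of_ne h1 h2]
        · simp
      rw [this]
      exact hdist.comp ((Equiv.swap x y).injective.sumMap Function.injective_id)
    · -- b' z < e z
      intro z
      by_cases h1 : z = x
      · subst h1
        rw [hb'x]
        by_contra hcon
        push_neg at hcon
        have hlt2 : e z < b y := lt_of_le_of_ne hcon (fun h => hne y z h.symm)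
        exact hne' z ⟨hbe z, hlt2⟩
      by_cases h2 : z = y
      · subst h2; rw [hb'y]; exact hlt.trans (hbe z)
      · rw [hb'z z h1 h2]; exact hbe z
    · intro u v
      by_cases h1 : v = x
      · subst h1
        rw [hb'x]
        constructor
        · intro h; exact ((hrep u v).mp h).trans hlt
        · intro h
          have : e u < b v := by
            rcases lt_trichotomy (e u) (b v) with h' | h' | h'
            · exact h'
            · exact absurd h'.symm (hne v u)
            · exact absurd ⟨h', h⟩ (hne' u)
          exact (hrep u v).mpr this
      by_cases h2 : v = y
      · subst h2
        rw [hb'y]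
        constructor
        · intro h
          have heu : e u < b v := (hrep u v).mp h
          rcases lt_trichotomy (e u) (b x) with h' | h' | h'
          · exact h'
          · exact absurd h'.symm (hne x u)
          · exact absurd ⟨h', heu⟩ (hne' u)
        · intro h
          exact (hrep u v).mpr (h.trans hlt)
      · rw [hb'z v h1 h2]; exact hrep u v
  · intro x y hxy hlt hnb hne'
    set e' : P → Q := fun z => if z = x then e y else if z = y then e x else e z with he'
    have he'x : e' x = e y := by simp [he']
    have he'y : e' y = e x := by simp [he', hxy.symm]
    have he'z : ∀ z : P, z ≠ x → z ≠ y → e' z = e z := by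
      intro z h1 h2; simp [he', h1, h2]
    refine ⟨e', he'x, he'y, he'z, ?_, ?_, ?_⟩
    · have : (Sum.elim b e' : P ⊕ P → Q)
          = (Sum.elim b e) ∘ Sum.map id (Equiv.swap x y) := by
        funext a
        rcases a with z | z
        · simp
        · by_cases h1 : z = x
          · subst h1; simp [he'x, Equiv.swap_apply_left]
          by_cases h2 : z = y
          · subst h2; simp [he'y, Equiv.swap_apply_right]
          · simp [he'z z h1 h2, Equiv.swap_apply_of_ne_of_ne h1 h2]
      rw [this]
      exact hdist.comp (Function.injective_id.sumMap (Equiv.swap x y).injective)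
    · intro z
      by_cases h1 : z = x
      · subst h1; rw [he'x]; exact (hbe z).trans hlt
      by_cases h2 : z = y
      · subst h2
        rw [he'y]
        by_contra hcon
        push_neg at hcon
        have hlt2 : e x < b z := lt_of_le_of_ne hcon (fun h => hne z x h.symm)
        exact hnb z ⟨hlt2, hbe z⟩
      · rw [he'z z h1 h2]; exact hbe z
    · intro u v
      by_cases h1 : u = x
      · subst h1
        rw [he'x]
        constructor
        · intro h
          have heu : e u < b v := (hrep u v).mp h
          rcases lt_trichotomy (e y) (b v) with h' | h' | h'
          · exact h'
          · exact absurd h' (Ne.symm (hne v y))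
          · exact absurd ⟨heu, h'⟩ (hnb v)
        · intro h
          exact (hrep u v).mpr (hlt.trans h)
      by_cases h2 : u = y
      · subst h2
        rw [he'y]
        constructor
        · intro h
          exact hlt.trans ((hrep u v).mp h)
        · intro h
          have : e u < b v := by
            rcases lt_trichotomy (e u) (b v) with h' | h' | h'
            · exact h'
            · exact absurd h' (Ne.symm (hne v u))
            · exact absurd ⟨h, h'⟩ (hnb v)
          exact (hrep u v).mpr this
      · rw [he'z u h1 h2]; exact hrep u v
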